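/- arXiv:2310.02628 — 2 statements merged into one kernel-verified Lean document; each statement's English description precedes it below -/
import Mathlib

section
/- Let N ≥ 1 and p ∈ [1,∞). Then there exists C₀ = C₀(N,p) > 0 such that for every s ∈ (0,1) and every continuously differentiable function u : ℝ^N → ℝ with compact support: ∬_{{(x,y) ∈ ℝ^N×ℝ^N : |x−y| < 1}} |u(x)−u(y)|^p / |x−y|^{N+sp} dx dy ≤ (C₀/(1−s)) · ‖∇u‖_{L^p(ℝ^N)}^p. -/
open MeasureTheory ENNReal Filter
open scoped RealInnerProductSpace

noncomputable section

abbrev Euc (N : ℕ) := EuclideanSpace ℝ (Fin N)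

/-- The normalizing constant `c_{N,s,p}`. -/
def cnsp (N : ℕ) (p s : ℝ) : ℝ :=
  s * (2 : ℝ) ^ (2 * s - 1) * Real.Gamma ((p * s + p + (N : ℝ) - 2) / 2) /
    (Real.pi ^ ((N : ℝ) / 2) * Real.Gamma (1 - s))

/-- `g` is a distributional (weak) gradient of `u`. -/
def IsWeakGrad (N : ℕ) (u : Euc N → ℝ) (g : Euc N → Euc N) : Prop :=
  Measurable g ∧
    ∀ φ : Euc N → ℝ, ContDiff ℝ (⊤ : ℕ∞) φ → HasCompactSupport φ → ∀ v : Euc N,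
      ∫ x, u x * fderiv ℝ φ x v = - ∫ x, ⟪g x, v⟫ * φ x

/-- `∫ |∇u|^p`, as an infimum over all weak gradients (`⊤` if none exists). -/
def gradP (N : ℕ) (p : ℝ) (u : Euc N → ℝ) : ℝ≥0∞ :=
  ⨅ (g : Euc N → Euc N) (_ : IsWeakGrad N u g), ∫⁻ x, (‖g x‖₊ : ℝ≥0∞) ^ p

/-- The (p-th power of the) Gagliardo seminorm for `s ∈ (0,1)`. -/
def gagDoubleP (N : ℕ) (p s : ℝ) (u : Euc N → ℝ) : ℝ≥0∞ :=
  ENNReal.ofReal (cnsp N p s) *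
    ∫⁻ z : Euc N × Euc N,
      (‖u z.1 - u z.2‖₊ : ℝ≥0∞) ^ p / (‖z.1 - z.2‖₊ : ℝ≥0∞) ^ ((N : ℝ) + s * p)

/-- p-th power of the Gagliardo seminorm `[u]_{s,p}^p`, with the conventions
`[u]_{0,p} = ‖u‖_{L^p}` and `[u]_{1,p} = ‖∇u‖_{L^p}` (or `⊤` if the distributional
gradient of `u` does not lie in `L^p`). -/
def gagP (N : ℕ) (p s : ℝ) (u : Euc N → ℝ) : ℝ≥0∞ :=
  if s = 0 then ∫⁻ x, (‖u x‖₊ : ℝ≥0∞) ^ p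
  else if s = 1 then gradP N p u
  else gagDoubleP N p s u

/-- The Gagliardo seminorm `[u]_{s,p}`. -/
def gagNorm (N : ℕ) (p s : ℝ) (u : Euc N → ℝ) : ℝ≥0∞ := gagP N p s u ^ (1 / p)

/-- `ρ_p(u)^p = ∫_{[0,1]} [u]_{s,p}^p dμ⁺(s)`. -/
def rhoP (N : ℕ) (p : ℝ) (μ : Measure ℝ) (u : Euc N → ℝ) : ℝ≥0∞ :=
  ∫⁻ s in Set.Icc (0 : ℝ) 1, gagP N p s u ∂μ

/-- `ρ_p(u)`. -/
def rho (N : ℕ) (p : ℝ) (μ : Measure ℝ) (u : Euc N → ℝ) : ℝ≥0∞ :=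
  rhoP N p μ u ^ (1 / p)

/-- Membership in the space `X_p(Ω)`. -/
def memXp (N : ℕ) (p : ℝ) (Ω : Set (Euc N)) (μ : Measure ℝ) (u : Euc N → ℝ) : Prop :=
  Measurable u ∧ (∀ᵐ x ∂(volume : Measure (Euc N)), x ∉ Ω → u x = 0) ∧ rhoP N p μ u ≠ ⊤

open Classical in
/-- A choice of weak gradient of `u` (junk value `0` if none exists). -/
def weakGrad (N : ℕ) (u : Euc N → ℝ) : Euc N → Euc N :=
  if h : ∃ g, IsWeakGrad N u g then h.choose else 0

/-- The pairing `𝔈_s(u,v)`, with the conventions at `s = 0` and `s = 1`. -/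
def pairE (N : ℕ) (p s : ℝ) (u v : Euc N → ℝ) : ℝ :=
  if s = 0 then ∫ x, |u x| ^ (p - 2) * u x * v x
  else if s = 1 then
    ∫ x, ‖weakGrad N u x‖ ^ (p - 2) * ⟪weakGrad N u x, weakGrad N v x⟫
  else
    cnsp N p s *
      ∫ z : Euc N × Euc N,
        |u z.1 - u z.2| ^ (p - 2) * (u z.1 - u z.2) * (v z.1 - v z.2) /
          ‖z.1 - z.2‖ ^ ((N : ℝ) + s * p)

section Aux12


lemma jensen_aux {f : ℝ → ℝ≥0∞} (hf : AEMeasurable f (volume.restrict (Set.Ioc (0:ℝ) 1)))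
    {p : ℝ} (hp : 1 ≤ p) :
    (∫⁻ t in Set.Ioc (0:ℝ) 1, f t) ^ p ≤ ∫⁻ t in Set.Ioc (0:ℝ) 1, f t ^ p := by
  rcases eq_or_lt_of_le hp with h1 | h1
  · simp [← h1]
  have hvol : (volume.restrict (Set.Ioc (0:ℝ) 1)) Set.univ = 1 := by simp
  have hpq : p.HolderConjugate (p / (p - 1)) := Real.HolderConjugate.conjExponent h1
  have key : (∫⁻ t in Set.Ioc (0:ℝ) 1, f t) ≤ (∫⁻ t in Set.Ioc (0:ℝ) 1, f t ^ p) ^ (1/p) := by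
    have := ENNReal.lintegral_mul_le_Lp_mul_Lq (volume.restrict (Set.Ioc (0:ℝ) 1)) hpq hf
      aemeasurable_const (g := fun _ => 1)
    simpa [hvol, ENNReal.one_rpow, lintegral_const, hvol] using this
  calc (∫⁻ t in Set.Ioc (0:ℝ) 1, f t) ^ p
      ≤ ((∫⁻ t in Set.Ioc (0:ℝ) 1, f t ^ p) ^ (1/p)) ^ p :=
        ENNReal.rpow_le_rpow key (by linarith)
    _ = ∫⁻ t in Set.Ioc (0:ℝ) 1, f t ^ p := by
        rw [← ENNReal.rpow_mul, one_div, inv_mul_cancel₀ (by linarith), ENNReal.rpow_one]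

lemma volume_singleton_zero (N : ℕ) (hN : 1 ≤ N) :
    volume ({0} : Set (Euc N)) = 0 := by
  refine le_antisymm ?_ (by positivity)
  refine le_trans (measure_mono (by simp : {(0 : Euc N)} ⊆ Metric.closedBall 0 0)) ?_
  rw [Measure.addHaar_closedBall _ _ le_rfl, finrank_euclideanSpace_fin,
    zero_pow (by omega : N ≠ 0)]
  simp

lemma radial_aux (N : ℕ) (hN : 1 ≤ N) {β : ℝ} (hβ0 : 0 < β) (hβN : β < N) :
    ∫⁻ h in Metric.ball (0 : Euc N) 1, (‖h‖₊ : ℝ≥0∞) ^ (β - N) ≤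
      volume (Metric.ball (0 : Euc N) 1) * ENNReal.ofReal (N / β) := by
  set γ : ℝ := (N : ℝ) - β with hγ
  have hγ0 : 0 < γ := by simp only [hγ, sub_pos]; exact hβN
  set B := Metric.ball (0 : Euc N) 1 with hB
  set μ := volume.restrict B with hμ
  have hfinrank : Module.finrank ℝ (Euc N) = N := finrank_euclideanSpace_fin
  have hae : ∀ᵐ h ∂μ, (‖h‖₊ : ℝ≥0∞) ^ (β - N) = ENNReal.ofReal (‖h‖ ^ (β - N)) := by
    have h0 : μ {(0 : Euc N)} = 0 := by
      rw [hμ, Measure.restrict_apply (measurableSet_singleton _)]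
      exact measure_mono_null Set.inter_subset_left (volume_singleton_zero N hN)
    filter_upwards [measure_eq_zero_iff_ae_notMem.mp h0] with h hh
    have hn : (0:ℝ) < ‖h‖ := by simpa [norm_pos_iff] using hh
    rw [← ENNReal.ofReal_rpow_of_pos hn, ofReal_norm]
    rfl
  rw [lintegral_congr_ae hae]
  have hmeas : Measurable fun h : Euc N => ‖h‖ ^ (β - N) := by fun_prop
  have hnn : 0 ≤ᵐ[μ] fun h : Euc N => ‖h‖ ^ (β - N) :=
    Eventually.of_forall fun h => Real.rpow_nonneg (norm_nonneg _) _
  rw [lintegral_eq_lintegral_meas_le μ hnn hmeas.aemeasurable]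
  have hSm : ∀ t : ℝ, MeasurableSet {a : Euc N | t ≤ ‖a‖ ^ (β - N)} := fun t =>
    measurableSet_le measurable_const hmeas
  have hlevel1 : ∀ t : ℝ, μ {a : Euc N | t ≤ ‖a‖ ^ (β - N)} ≤ volume B := fun t => by
    rw [hμ, Measure.restrict_apply (hSm t)]
    exact measure_mono Set.inter_subset_right
  have hlevel2 : ∀ t : ℝ, 0 < t →
      μ {a : Euc N | t ≤ ‖a‖ ^ (β - N)} ≤
        ENNReal.ofReal (t ^ (-(γ⁻¹) * N)) * volume B := by
    intro t ht
    rw [hμ, Measure.restrict_apply (hSm t)]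
    refine le_trans (measure_mono
      (?_ : _ ⊆ Metric.closedBall (0 : Euc N) (t ^ (-γ⁻¹)))) ?_
    · rintro a ⟨hmem, -⟩
      simp only [Set.mem_setOf_eq] at hmem
      rcases eq_or_ne a 0 with rfl | ha0
      · exfalso
        rw [norm_zero, Real.zero_rpow (by linarith : β - (N:ℝ) ≠ 0)] at hmem
        exact absurd hmem (not_le.mpr ht)
      · have hna : (0:ℝ) < ‖a‖ := norm_pos_iff.mpr ha0
        simp only [Metric.mem_closedBall, dist_zero_right]
        have heq : β - (N:ℝ) = -γ := by ring
        rw [heq] at hmem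
        have h2 := Real.rpow_le_rpow ht.le hmem (by positivity : (0:ℝ) ≤ γ⁻¹)
        rw [← Real.rpow_mul hna.le, neg_mul, mul_inv_cancel₀ hγ0.ne',
          Real.rpow_neg_one] at h2
        calc ‖a‖ = (‖a‖⁻¹)⁻¹ := by rw [inv_inv]
          _ ≤ (t ^ γ⁻¹)⁻¹ := inv_anti₀ (by positivity) h2
          _ = t ^ (-γ⁻¹) := by rw [← Real.rpow_neg ht.le]
    · rw [Measure.addHaar_closedBall _ _ (by positivity), hfinrank,
        ← Real.rpow_natCast (t ^ (-γ⁻¹)) N, ← Real.rpow_mul (by positivity)]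
  calc ∫⁻ t in Set.Ioi (0:ℝ), μ {a : Euc N | t ≤ ‖a‖ ^ (β - N)}
      ≤ (∫⁻ t in Set.Ioc (0:ℝ) 1, μ {a : Euc N | t ≤ ‖a‖ ^ (β - N)}) +
        ∫⁻ t in Set.Ioi (1:ℝ), μ {a : Euc N | t ≤ ‖a‖ ^ (β - N)} :=
        le_trans (lintegral_mono_set Set.Ioi_subset_Ioc_union_Ioi)
          (lintegral_union_le _ _ _)
    _ ≤ volume B + ENNReal.ofReal (γ / β) * volume B := by
        gcongr
        · calc ∫⁻ t in Set.Ioc (0:ℝ) 1, μ {a : Euc N | t ≤ ‖a‖ ^ (β - N)}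
              ≤ ∫⁻ _ in Set.Ioc (0:ℝ) 1, volume B :=
                setLIntegral_mono' measurableSet_Ioc fun t _ => hlevel1 t
            _ = volume B := by simp
        · calc ∫⁻ t in Set.Ioi (1:ℝ), μ {a : Euc N | t ≤ ‖a‖ ^ (β - N)}
              ≤ ∫⁻ t in Set.Ioi (1:ℝ), ENNReal.ofReal (t ^ (-(γ⁻¹) * N)) * volume B :=
                setLIntegral_mono' measurableSet_Ioi fun t ht =>
                  hlevel2 t (lt_trans one_pos ht)
            _ = (∫⁻ t in Set.Ioi (1:ℝ), ENNReal.ofReal (t ^ (-(γ⁻¹) * N))) * volume B :=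
                lintegral_mul_const' _ _ measure_ball_lt_top.ne
            _ = ENNReal.ofReal (γ / β) * volume B := by
                congr 1
                have hexp : -(γ⁻¹) * N < -1 := by
                  rw [neg_mul, neg_lt_neg_iff, lt_inv_mul_iff₀ hγ0]
                  simpa [hγ] using hβ0
                have hint : IntegrableOn (fun t : ℝ => t ^ (-(γ⁻¹) * N)) (Set.Ioi 1) :=
                  integrableOn_Ioi_rpow_of_lt hexp one_pos
                rw [← ofReal_integral_eq_lintegral_ofReal hint
                  (Filter.eventually_of_mem (self_mem_ae_restrict measurableSet_Ioi)
                    (fun t ht => Real.rpow_nonneg (le_of_lt (lt_trans one_pos ht)) _))]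
                rw [integral_Ioi_rpow_of_lt hexp one_pos, Real.one_rpow]
                congr 1
                have h1 : -γ⁻¹ * (N:ℝ) + 1 = -(β/γ) := by
                  field_simp
                  simp only [hγ]
                  ring
                rw [h1, neg_div_neg_eq, one_div, inv_div]
    _ = (1 + ENNReal.ofReal (γ / β)) * volume B := by ring
    _ = volume B * ENNReal.ofReal (N / β) := by
        rw [← ENNReal.ofReal_one, ← ENNReal.ofReal_add one_pos.le (by positivity), mul_comm]
        congr 2
        field_simp [hγ]
        linarith

lemma ftc_bound {N : ℕ} {u : Euc N → ℝ} (hu : ContDiff ℝ 1 u) (y h : Euc N) :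
    (‖u (h + y) - u y‖₊ : ℝ≥0∞) ≤
      (‖h‖₊ : ℝ≥0∞) * ∫⁻ t in Set.Ioc (0:ℝ) 1, (‖fderiv ℝ u (y + t • h)‖₊ : ℝ≥0∞) := by
  have hline : ∀ t : ℝ, HasDerivAt (fun t : ℝ => y + t • h) h t := fun t => by
    simpa using ((hasDerivAt_id t).smul_const h).const_add y
  have hg : ∀ t : ℝ, HasDerivAt (fun t : ℝ => u (y + t • h)) (fderiv ℝ u (y + t • h) h) t :=
    fun t => ((hu.differentiable one_ne_zero _).hasFDerivAt).comp_hasDerivAt t (hline t)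
  have hderc : Continuous fun t : ℝ => fderiv ℝ u (y + t • h) :=
    (hu.continuous_fderiv one_ne_zero).comp (by continuity)
  have hdercv : Continuous fun t : ℝ => fderiv ℝ u (y + t • h) h :=
    hderc.clm_apply continuous_const
  have hint : IntervalIntegrable (fun t : ℝ => fderiv ℝ u (y + t • h) h) volume 0 1 :=
    hdercv.intervalIntegrable _ _
  have hftc : u (h + y) - u y = ∫ t in (0:ℝ)..1, fderiv ℝ u (y + t • h) h := by
    rw [intervalIntegral.integral_eq_sub_of_hasDerivAt (fun t _ => hg t) hint]
    simp [add_comm]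
  have hreal : ‖u (h + y) - u y‖ ≤ ∫ t in (0:ℝ)..1, ‖fderiv ℝ u (y + t • h)‖ * ‖h‖ := by
    rw [hftc]
    refine le_trans (intervalIntegral.norm_integral_le_integral_norm zero_le_one) ?_
    refine intervalIntegral.integral_mono_on zero_le_one hint.norm
      (((hderc.norm.mul continuous_const)).intervalIntegrable _ _) fun t _ => ?_
    exact (fderiv ℝ u (y + t • h)).le_opNorm h
  calc (‖u (h + y) - u y‖₊ : ℝ≥0∞) = ENNReal.ofReal ‖u (h + y) - u y‖ :=
        (ofReal_norm _).symm
    _ ≤ ENNReal.ofReal (∫ t in (0:ℝ)..1, ‖fderiv ℝ u (y + t • h)‖ * ‖h‖) :=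
        ENNReal.ofReal_le_ofReal hreal
    _ = ∫⁻ t in Set.Ioc (0:ℝ) 1, ENNReal.ofReal (‖fderiv ℝ u (y + t • h)‖ * ‖h‖) := by
        rw [intervalIntegral.integral_of_le zero_le_one,
          ofReal_integral_eq_lintegral_ofReal (f := fun t => ‖fderiv ℝ u (y + t • h)‖ * ‖h‖)
            ((hderc.norm.mul continuous_const).integrableOn_Ioc)
            (Eventually.of_forall fun t => by positivity)]
    _ = (‖h‖₊ : ℝ≥0∞) * ∫⁻ t in Set.Ioc (0:ℝ) 1, (‖fderiv ℝ u (y + t • h)‖₊ : ℝ≥0∞) := by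
        rw [← lintegral_const_mul' _ _ ENNReal.coe_ne_top]
        congr 1 with t
        rw [ENNReal.ofReal_mul (norm_nonneg _), ofReal_norm,
          ofReal_norm, mul_comm]
        rfl

lemma point_bound {N : ℕ} {p : ℝ} (hp : 1 ≤ p) {u : Euc N → ℝ} (hu : ContDiff ℝ 1 u)
    (y h : Euc N) :
    (‖u (h + y) - u y‖₊ : ℝ≥0∞) ^ p ≤
      (‖h‖₊ : ℝ≥0∞) ^ p *
        ∫⁻ t in Set.Ioc (0:ℝ) 1, (‖fderiv ℝ u (y + t • h)‖₊ : ℝ≥0∞) ^ p := by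
  have h0 : (0:ℝ) ≤ p := by linarith
  have hmeas : AEMeasurable (fun t : ℝ => (‖fderiv ℝ u (y + t • h)‖₊ : ℝ≥0∞))
      (volume.restrict (Set.Ioc (0:ℝ) 1)) := by
    exact ((((hu.continuous_fderiv one_ne_zero).comp
      (by continuity : Continuous fun t : ℝ => y + t • h)).nnnorm).measurable.coe_nnreal_ennreal).aemeasurable
  calc (‖u (h + y) - u y‖₊ : ℝ≥0∞) ^ p
      ≤ ((‖h‖₊ : ℝ≥0∞) *
          ∫⁻ t in Set.Ioc (0:ℝ) 1, (‖fderiv ℝ u (y + t • h)‖₊ : ℝ≥0∞)) ^ p :=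
        ENNReal.rpow_le_rpow (ftc_bound hu y h) h0
    _ = (‖h‖₊ : ℝ≥0∞) ^ p *
          (∫⁻ t in Set.Ioc (0:ℝ) 1, (‖fderiv ℝ u (y + t • h)‖₊ : ℝ≥0∞)) ^ p :=
        ENNReal.mul_rpow_of_nonneg _ _ h0
    _ ≤ _ := mul_le_mul_right (jensen_aux hmeas hp) _


end Aux12

/-- near-diagonal estimate: the Gagliardo energy restricted to `{|x−y| < 1}`
is controlled by `C₀/(1−s) · ‖∇u‖_{L^p}^p` for `C¹` compactly supported `u`. -/
theorem statement12 (N : ℕ) (hN : 1 ≤ N) (p : ℝ) (hp : 1 ≤ p) :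
    ∃ C₀ : ℝ, 0 < C₀ ∧ ∀ s ∈ Set.Ioo (0 : ℝ) 1, ∀ u : Euc N → ℝ,
      ContDiff ℝ 1 u → HasCompactSupport u →
      (∫⁻ z in {z : Euc N × Euc N | dist z.1 z.2 < 1},
          (‖u z.1 - u z.2‖₊ : ℝ≥0∞) ^ p / (‖z.1 - z.2‖₊ : ℝ≥0∞) ^ ((N : ℝ) + s * p)) ≤
        ENNReal.ofReal (C₀ / (1 - s)) * ∫⁻ x, (‖fderiv ℝ u x‖₊ : ℝ≥0∞) ^ p := by
  --

  set v : ℝ := (volume (Metric.ball (0 : Euc N) 1)).toReal with hv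
  have hvpos : 0 < v := ENNReal.toReal_pos (Metric.measure_ball_pos _ _ one_pos).ne'
    measure_ball_lt_top.ne
  refine ⟨v * N, by positivity, ?_⟩
  rintro s ⟨hs0, hs1⟩ u hu hsupp
  have hp0 : (0:ℝ) ≤ p := by linarith
  set ε : ℝ := p * (1 - s) with hε
  have hε0 : 0 < ε := by nlinarith
  have hε1s : 1 - s ≤ ε := by nlinarith
  set D : Euc N → ℝ≥0∞ := fun x => (‖fderiv ℝ u x‖₊ : ℝ≥0∞) ^ p with hD
  have hDmeas : Measurable D :=
    ((hu.continuous_fderiv one_ne_zero).nnnorm.measurable.coe_nnreal_ennreal).pow_const p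
  set G : ℝ≥0∞ := ∫⁻ x, D x with hG
  set F : Euc N × Euc N → ℝ≥0∞ := fun z =>
    (‖u z.1 - u z.2‖₊ : ℝ≥0∞) ^ p / (‖z.1 - z.2‖₊ : ℝ≥0∞) ^ ((N : ℝ) + s * p) with hF
  have hFmeas : Measurable F := by
    apply Measurable.div
    · exact (((hu.continuous.comp continuous_fst).sub
        (hu.continuous.comp continuous_snd)).nnnorm.measurable.coe_nnreal_ennreal).pow_const p
    · exact ((continuous_fst.sub continuous_snd).nnnorm.measurable.coe_nnreal_ennreal).pow_const _
  set S : Set (Euc N × Euc N) := {z | dist z.1 z.2 < 1} with hS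
  have hSmeas : MeasurableSet S :=
    (isOpen_lt (continuous_fst.dist continuous_snd) continuous_const).measurableSet
  -- Step 1: to an iterated integral with substitution x = h + y
  have step1 : (∫⁻ z in S, F z) =
      ∫⁻ y, ∫⁻ h in Metric.ball (0 : Euc N) 1, F (h + y, y) := by
    rw [← lintegral_indicator hSmeas]
    rw [show (volume : Measure (Euc N × Euc N)) = (volume : Measure (Euc N)).prod volume from
      (MeasureTheory.Measure.volume_eq_prod _ _) ]
    rw [lintegral_prod_symm _ (hFmeas.indicator hSmeas).aemeasurable]
    refine lintegral_congr fun y => ?_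
    calc ∫⁻ x, S.indicator F (x, y)
        = ∫⁻ h, S.indicator F (h + y, y) :=
          (lintegral_add_right_eq_self (fun x => S.indicator F (x, y)) y).symm
      _ = ∫⁻ h, (Metric.ball (0 : Euc N) 1).indicator (fun h => F (h + y, y)) h := by
          refine lintegral_congr fun h => ?_
          by_cases hb : h ∈ Metric.ball (0 : Euc N) 1
          · rw [Set.indicator_of_mem hb, Set.indicator_of_mem]
            simpa [hS, dist_eq_norm, add_sub_cancel_right, dist_zero_right] using hb
          · rw [Set.indicator_of_notMem hb, Set.indicator_of_notMem]
            intro hc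
            apply hb
            simpa [hS, dist_eq_norm, add_sub_cancel_right, dist_zero_right] using hc
      _ = ∫⁻ h in Metric.ball (0 : Euc N) 1, F (h + y, y) :=
          lintegral_indicator (measurableSet_ball) _
  -- Step 2: swap the two integrals
  have step2 : (∫⁻ y, ∫⁻ h in Metric.ball (0 : Euc N) 1, F (h + y, y)) =
      ∫⁻ h in Metric.ball (0 : Euc N) 1, ∫⁻ y, F (h + y, y) := by
    refine lintegral_lintegral_swap ?_
    exact (hFmeas.comp ((measurable_snd.add measurable_fst).prodMk measurable_fst)).aemeasurable
  -- Step 3: key estimate for fixed h ≠ 0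
  have step3 : ∀ h : Euc N, h ≠ 0 → (∫⁻ y, F (h + y, y)) ≤ (‖h‖₊ : ℝ≥0∞) ^ (ε - N) * G := by
    intro h hh
    have hn0 : (‖h‖₊ : ℝ≥0∞) ≠ 0 := by simpa [nnnorm_eq_zero] using hh
    have hntop : (‖h‖₊ : ℝ≥0∞) ≠ ⊤ := ENNReal.coe_ne_top
    set c : ℝ≥0∞ := (‖h‖₊ : ℝ≥0∞) ^ ((N : ℝ) + s * p) with hc
    have hc0 : c ≠ 0 := by
      simp only [hc, ne_eq, ENNReal.rpow_eq_zero_iff, not_or]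
      constructor
      · rintro ⟨h1, -⟩; exact hn0 h1
      · rintro ⟨h1, -⟩; exact hntop h1
    have hinv : c⁻¹ ≠ ⊤ := by simpa using hc0
    have hFval : ∀ y : Euc N, F (h + y, y) = (‖u (h + y) - u y‖₊ : ℝ≥0∞) ^ p * c⁻¹ := by
      intro y
      simp only [hF, hc, add_sub_cancel_right, div_eq_mul_inv]
    calc (∫⁻ y, F (h + y, y))
        = (∫⁻ y, (‖u (h + y) - u y‖₊ : ℝ≥0∞) ^ p) * c⁻¹ := by
          simp_rw [hFval]
          exact lintegral_mul_const' _ _ hinv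
      _ ≤ (∫⁻ y, (‖h‖₊ : ℝ≥0∞) ^ p *
            ∫⁻ t in Set.Ioc (0:ℝ) 1, D (y + t • h)) * c⁻¹ := by
          exact mul_le_mul_left (lintegral_mono fun y => point_bound hp hu y h) _
      _ = ((‖h‖₊ : ℝ≥0∞) ^ p * ∫⁻ y, ∫⁻ t in Set.Ioc (0:ℝ) 1, D (y + t • h)) * c⁻¹ := by
          rw [lintegral_const_mul' _ _ (ENNReal.rpow_ne_top_of_nonneg hp0 hntop)]
      _ = ((‖h‖₊ : ℝ≥0∞) ^ p * G) * c⁻¹ := by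
          congr 2
          rw [lintegral_lintegral_swap]
          · calc ∫⁻ t in Set.Ioc (0:ℝ) 1, ∫⁻ y, D (y + t • h)
                = ∫⁻ _ in Set.Ioc (0:ℝ) 1, G := by
                  refine lintegral_congr fun t => ?_
                  exact lintegral_add_right_eq_self D (t • h)
              _ = G := by simp
          · exact (hDmeas.comp
              (measurable_fst.add (measurable_snd.smul_const h))).aemeasurable
      _ = (‖h‖₊ : ℝ≥0∞) ^ (ε - N) * G := by
          rw [mul_right_comm]
          congr 1
          rw [← div_eq_mul_inv, hc, ← ENNReal.rpow_sub _ _ hn0 hntop]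
          congr 1
          simp only [hε]
          ring
  -- Step 4: assemble
  calc (∫⁻ z in S, F z)
      = ∫⁻ h in Metric.ball (0 : Euc N) 1, ∫⁻ y, F (h + y, y) := by rw [step1, step2]
    _ ≤ ∫⁻ h in Metric.ball (0 : Euc N) 1, (‖h‖₊ : ℝ≥0∞) ^ (ε - N) * G := by
        have hzero : (volume.restrict (Metric.ball (0 : Euc N) 1)) {(0 : Euc N)} = 0 := by
          rw [Measure.restrict_apply (measurableSet_singleton _)]
          exact measure_mono_null Set.inter_subset_left (volume_singleton_zero N hN)
        refine lintegral_mono_ae ?_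
        filter_upwards [measure_eq_zero_iff_ae_notMem.mp hzero] with h hh
        exact step3 h (by simpa using hh)
    _ = (∫⁻ h in Metric.ball (0 : Euc N) 1, (‖h‖₊ : ℝ≥0∞) ^ (ε - N)) * G :=
        lintegral_mul_const'' _
          ((measurable_nnnorm.coe_nnreal_ennreal.pow_const _).aemeasurable)
    _ ≤ ENNReal.ofReal (v * N / (1 - s)) * G := by
        gcongr
        by_cases hcase : ε < N
        · calc (∫⁻ h in Metric.ball (0 : Euc N) 1, (‖h‖₊ : ℝ≥0∞) ^ (ε - N))
              ≤ volume (Metric.ball (0 : Euc N) 1) * ENNReal.ofReal (N / ε) :=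
              radial_aux N hN hε0 hcase
            _ = ENNReal.ofReal (v * (N / ε)) := by
              rw [ENNReal.ofReal_mul hvpos.le, hv,
                ENNReal.ofReal_toReal measure_ball_lt_top.ne]
            _ ≤ ENNReal.ofReal (v * N / (1 - s)) := by
              refine ENNReal.ofReal_le_ofReal ?_
              rw [mul_div_assoc]
              refine mul_le_mul_of_nonneg_left ?_ hvpos.le
              exact div_le_div_of_nonneg_left (Nat.cast_nonneg N) (by linarith) hε1s
        · push_neg at hcase
          calc (∫⁻ h in Metric.ball (0 : Euc N) 1, (‖h‖₊ : ℝ≥0∞) ^ (ε - N))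
              ≤ ∫⁻ _ in Metric.ball (0 : Euc N) 1, 1 := by
                refine setLIntegral_mono' measurableSet_ball fun h hmem => ?_
                refine ENNReal.rpow_le_one ?_ (by linarith)
                rw [Metric.mem_ball, dist_zero_right] at hmem
                exact_mod_cast le_of_lt (show ‖h‖₊ < 1 by exact_mod_cast hmem)
            _ = volume (Metric.ball (0 : Euc N) 1) := by simp
            _ = ENNReal.ofReal v := by rw [hv, ENNReal.ofReal_toReal measure_ball_lt_top.ne]
            _ ≤ ENNReal.ofReal (v * N / (1 - s)) := by
                refine ENNReal.ofReal_le_ofReal ?_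
                rw [mul_div_assoc]
                refine le_mul_of_one_le_right hvpos.le ?_
                rw [le_div_iff₀ (by linarith)]
                have : (1:ℝ) ≤ N := by exact_mod_cast hN
                nlinarith


end
end

section
/- Let N ≥ 1, let Ω ⊂ ℝ^N be a bounded open set and let p ∈ [1,∞). Then there exists c = c(N, Ω, p) > 0 such that for every s ∈ (0,1) and every measurable u : ℝ^N → ℝ with u = 0 a.e. in ℝ^N ∖ Ω: ∬_{ℝ^N×ℝ^N} |u(x)−u(y)|^p / |x−y|^{N+sp} dx dy ≥ (c/s) · ‖u‖_{L^p(ℝ^N)}^p. -/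
open MeasureTheory ENNReal Filter
open scoped RealInnerProductSpace

noncomputable section

open Metric in
/-- real arithmetic per annulus -/
lemma real_annulus (N : ℕ) (R s p : ℝ) (hR : 1 ≤ R) (hs0 : 0 < s) (hs1 : s < 1)
    (hp : 1 ≤ p) (k : ℕ) :
    ((2:ℝ)^N - 1) * (2*R)^N * (8*R) ^ (-((N:ℝ) + p)) * ((2:ℝ) ^ (-(s*p)))^k ≤
    (8 * 2^k * R) ^ (-((N:ℝ) + s*p)) * (((2:ℝ)^(k+1)*(2*R))^N - ((2:ℝ)^k*(2*R))^N) := by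
  have h2k : (0:ℝ) < 2^k := by positivity
  have hR0 : (0:ℝ) < R := lt_of_lt_of_le one_pos hR
  have e1 : ((2:ℝ)^(k+1)*(2*R))^N - ((2:ℝ)^k*(2*R))^N
      = ((2:ℝ)^N - 1) * (((2:ℝ)^k)^N * (2*R)^N) := by
    rw [pow_succ, mul_pow, mul_pow]; ring
  have e2 : ((8:ℝ) * 2^k * R) = (8*R) * 2^k := by ring
  have e3 : ((2:ℝ)^k) ^ (-((N:ℝ)+s*p)) * ((2:ℝ)^k : ℝ)^(N:ℕ)
      = ((2:ℝ) ^ (-(s*p)))^k := by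
    rw [← Real.rpow_natCast ((2:ℝ)^k) N, ← Real.rpow_add h2k]
    rw [← Real.rpow_natCast ((2:ℝ) ^ (-(s*p))) k,
      ← Real.rpow_natCast (2:ℝ) k, ← Real.rpow_mul (by norm_num),
      ← Real.rpow_mul (by norm_num)]
    congr 1; ring
  have e2' : ((8:ℝ)*R*2^k) ^ (-((N:ℝ)+s*p))
      = (8*R)^(-((N:ℝ)+s*p)) * ((2:ℝ)^k)^(-((N:ℝ)+s*p)) :=
    Real.mul_rpow (by positivity) (by positivity)
  rw [e1, e2, e2']
  calc ((2:ℝ)^N - 1) * (2*R)^N * (8*R) ^ (-((N:ℝ) + p)) * ((2:ℝ) ^ (-(s*p)))^k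
      ≤ ((2:ℝ)^N - 1) * (2*R)^N * (8*R) ^ (-((N:ℝ) + s*p)) * ((2:ℝ) ^ (-(s*p)))^k := by
        have h1 : (1:ℝ) < 8*R := by nlinarith
        have hN2 : (0:ℝ) ≤ (2:ℝ)^N - 1 := by
          have : (1:ℝ) ≤ 2^N := one_le_pow₀ (by norm_num)
          linarith
        have hrpow : (8*R) ^ (-((N:ℝ) + p)) ≤ (8*R) ^ (-((N:ℝ) + s*p)) :=
          (Real.rpow_le_rpow_left_iff h1).2 (by nlinarith)
        apply mul_le_mul_of_nonneg_right _ (by positivity)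
        exact mul_le_mul_of_nonneg_left hrpow (mul_nonneg hN2 (by positivity))
    _ = (8*R) ^ (-((N:ℝ) + s*p)) * ((2:ℝ)^k) ^ (-((N:ℝ)+s*p)) *
          (((2:ℝ)^N - 1) * (((2:ℝ)^k)^N * (2*R)^N)) := by
        rw [← e3]; push_cast; ring
    _ = (8*R)^(-((N:ℝ)+s*p)) * ((2:ℝ)^k)^(-((N:ℝ)+s*p)) *
          (((2:ℝ)^N - 1) * (((2:ℝ)^k)^N * (2*R)^N)) := rfl

def bcn (N : ℕ) (R p : ℝ) : ℝ :=
  ((2:ℝ)^N - 1) * (2*R)^N * (8*R) ^ (-((N:ℝ) + p))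

/-- The constant in the tail bound. -/
def pcn (N : ℕ) (R p : ℝ) : ℝ :=
  bcn N R p * (volume (Metric.ball (0:Euc N) 1)).toReal / (p * Real.log 2)

lemma tail_bound (N : ℕ) (hN : 1 ≤ N) (R s p : ℝ) (hR : 1 ≤ R) (hs0 : 0 < s)
    (hs1 : s < 1) (hp : 1 ≤ p) (x : Euc N) (hx : ‖x‖ ≤ R) :
    ENNReal.ofReal (pcn N R p / s) ≤
      ∫⁻ y in (Metric.closedBall (0:Euc N) (2*R))ᶜ,
        ((‖x - y‖₊ : ℝ≥0∞) ^ ((N:ℝ) + s*p))⁻¹ := by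
  have hR0 : (0:ℝ) < R := lt_of_lt_of_le one_pos hR
  have hp0 : (0:ℝ) < p := lt_of_lt_of_le one_pos hp
  have h2N : (2:ℝ) ≤ 2^N := by
    calc (2:ℝ) = 2^1 := (pow_one 2).symm
    _ ≤ 2^N := pow_le_pow_right₀ one_le_two hN
  set e : ℝ := (N:ℝ) + s*p with he
  have he0 : (0:ℝ) ≤ e := by positivity
  set q : ℝ := (2:ℝ) ^ (-(s*p)) with hq
  have hq0 : (0:ℝ) < q := Real.rpow_pos_of_pos two_pos _
  have hq1 : q < 1 := Real.rpow_lt_one_of_one_lt_of_neg one_lt_two (by nlinarith)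
  set b : ℝ := bcn N R p with hbdef
  have hb0 : (0:ℝ) < b := by
    rw [hbdef, bcn]
    apply _root_.mul_pos (_root_.mul_pos (by linarith) (by positivity))
      (Real.rpow_pos_of_pos (by linarith) _)
  set ωb : ℝ≥0∞ := volume (Metric.ball (0:Euc N) 1) with hωb
  have hωtop : ωb ≠ ⊤ := measure_ball_lt_top.ne
  set g : Euc N → ℝ≥0∞ := fun y => ((‖x - y‖₊ : ℝ≥0∞) ^ e)⁻¹ with hg
  set A : ℕ → Set (Euc N) := fun k =>
    Metric.closedBall 0 ((2:ℝ)^(k+1)*(2*R)) \ Metric.closedBall 0 ((2:ℝ)^k*(2*R)) with hA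
  have hAm : ∀ k, MeasurableSet (A k) :=
    fun k => measurableSet_closedBall.diff measurableSet_closedBall
  have hAd : Pairwise (Function.onFun Disjoint A) := by
    have key : ∀ k l, k < l → Disjoint (A k) (A l) := by
      intro k l hkl
      rw [Set.disjoint_left]
      rintro y ⟨hy1, -⟩ ⟨-, hy2⟩
      apply hy2
      simp only [hA, Metric.mem_closedBall] at hy1 ⊢
      refine hy1.trans ?_
      have h1 : (2:ℝ)^(k+1) ≤ (2:ℝ)^l := pow_le_pow_right₀ one_le_two hkl
      nlinarith
    intro k l hkl
    rcases hkl.lt_or_gt with h | h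
    · exact key k l h
    · exact (key l k h).symm
  have hAsub : (⋃ k, A k) ⊆ (Metric.closedBall (0:Euc N) (2*R))ᶜ := by
    intro y hy
    simp only [Set.mem_iUnion] at hy
    obtain ⟨k, hk1, hk2⟩ := hy
    intro hmem
    apply hk2
    apply Metric.closedBall_subset_closedBall _ hmem
    have h1 : (1:ℝ) ≤ 2^k := one_le_pow₀ one_le_two
    nlinarith
  have hvol : ∀ k, volume (A k) =
      ENNReal.ofReal (((2:ℝ)^(k+1)*(2*R))^N - ((2:ℝ)^k*(2*R))^N) * ωb := by
    intro k
    have h1 : (2:ℝ)^k ≤ 2^(k+1) := pow_le_pow_right₀ one_le_two (Nat.le_succ k)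
    have hsub : Metric.closedBall (0:Euc N) ((2:ℝ)^k*(2*R)) ⊆
        Metric.closedBall 0 ((2:ℝ)^(k+1)*(2*R)) :=
      Metric.closedBall_subset_closedBall (by nlinarith)
    rw [hA]
    simp only
    rw [measure_diff hsub measurableSet_closedBall.nullMeasurableSet
      measure_closedBall_lt_top.ne,
      Measure.addHaar_closedBall _ _ (by positivity),
      Measure.addHaar_closedBall _ _ (by positivity),
      finrank_euclideanSpace_fin,
      ← ENNReal.sub_mul (fun _ _ => hωtop),
      ← ENNReal.ofReal_sub _ (by positivity)]
  have hpoint : ∀ k, ∀ y ∈ A k,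
      ENNReal.ofReal ((8*2^k*R) ^ (-e)) ≤ g y := by
    intro k y hy
    have h2k : (1:ℝ) ≤ 2^k := one_le_pow₀ one_le_two
    have hyn : ‖y‖ ≤ (2:ℝ)^(k+1)*(2*R) := by
      have h := hy.1
      rwa [Metric.mem_closedBall, dist_zero_right] at h
    have hxy : ‖x - y‖ ≤ 8*2^k*R := by
      calc ‖x - y‖ ≤ ‖x‖ + ‖y‖ := norm_sub_le x y
      _ ≤ R + (2:ℝ)^(k+1)*(2*R) := add_le_add hx hyn
      _ ≤ 8*2^k*R := by rw [pow_succ]; nlinarith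
    have hb : (‖x - y‖₊ : ℝ≥0∞) ^ e ≤ ENNReal.ofReal ((8*2^k*R) ^ e) := by
      rw [← ENNReal.ofReal_rpow_of_pos (by positivity)]
      apply ENNReal.rpow_le_rpow _ he0
      rw [← ENNReal.ofReal_coe_nnreal, coe_nnnorm]
      exact ENNReal.ofReal_le_ofReal hxy
    calc ENNReal.ofReal ((8*2^k*R) ^ (-e))
        = (ENNReal.ofReal ((8*2^k*R) ^ e))⁻¹ := by
          rw [Real.rpow_neg (by positivity), ENNReal.ofReal_inv_of_pos (by positivity)]
      _ ≤ g y := ENNReal.inv_le_inv' hb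
  have perk : ∀ k : ℕ, ENNReal.ofReal (b * q^k) * ωb ≤ ∫⁻ y in A k, g y := by
    intro k
    calc ENNReal.ofReal (b * q^k) * ωb
        ≤ ENNReal.ofReal ((8*2^k*R) ^ (-e) *
            (((2:ℝ)^(k+1)*(2*R))^N - ((2:ℝ)^k*(2*R))^N)) * ωb := by
          refine mul_le_mul_left (ENNReal.ofReal_le_ofReal ?_) ωb
          rw [hbdef, bcn]
          exact real_annulus N R s p hR hs0 hs1 hp k
      _ = ENNReal.ofReal ((8*2^k*R) ^ (-e)) *
            (ENNReal.ofReal (((2:ℝ)^(k+1)*(2*R))^N - ((2:ℝ)^k*(2*R))^N) * ωb) := by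
          rw [ENNReal.ofReal_mul (by positivity), mul_assoc]
      _ = ENNReal.ofReal ((8*2^k*R) ^ (-e)) * volume (A k) := by rw [hvol k]
      _ = ∫⁻ _ in A k, ENNReal.ofReal ((8*2^k*R) ^ (-e)) := (setLIntegral_const _ _).symm
      _ ≤ ∫⁻ y in A k, g y := setLIntegral_mono' (hAm k) (hpoint k)
  have hsum : ∑' k : ℕ, ENNReal.ofReal (b * q^k) * ωb
      = ENNReal.ofReal b * ωb * (1 - ENNReal.ofReal q)⁻¹ := by
    have h1 : ∀ k : ℕ, ENNReal.ofReal (b * q^k) * ωb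
        = (ENNReal.ofReal b * ωb) * (ENNReal.ofReal q)^k := by
      intro k
      rw [ENNReal.ofReal_mul hb0.le, ENNReal.ofReal_pow hq0.le]
      ring
    rw [tsum_congr h1, ENNReal.tsum_mul_left, ENNReal.tsum_geometric]
  have hgeo : ENNReal.ofReal ((s*(p*Real.log 2))⁻¹) ≤ (1 - ENNReal.ofReal q)⁻¹ := by
    have hlog : (0:ℝ) < Real.log 2 := Real.log_pos one_lt_two
    have hle : 1 - q ≤ s*(p*Real.log 2) := by
      have h1 := Real.add_one_le_exp (-(s*p*Real.log 2))
      have hqexp : q = Real.exp (-(s*p*Real.log 2)) := by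
        rw [hq, Real.rpow_def_of_pos two_pos]; ring_nf
      rw [hqexp]; nlinarith
    have h1q : (0:ℝ) < 1 - q := by linarith
    calc ENNReal.ofReal ((s*(p*Real.log 2))⁻¹)
        ≤ ENNReal.ofReal ((1-q)⁻¹) := by
          apply ENNReal.ofReal_le_ofReal
          exact inv_anti₀ h1q hle
      _ = (ENNReal.ofReal (1-q))⁻¹ := ENNReal.ofReal_inv_of_pos h1q
      _ = (1 - ENNReal.ofReal q)⁻¹ := by
          rw [ENNReal.ofReal_sub _ hq0.le, ENNReal.ofReal_one]
  calc ENNReal.ofReal (pcn N R p / s)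
      = ENNReal.ofReal b * ENNReal.ofReal ωb.toReal *
          ENNReal.ofReal ((s*(p*Real.log 2))⁻¹) := by
        rw [← ENNReal.ofReal_mul hb0.le, ← ENNReal.ofReal_mul (by positivity)]
        congr 1
        rw [pcn, ← hbdef, ← hωb, div_div, mul_comm (p*Real.log 2) s, div_eq_mul_inv]
    _ = ENNReal.ofReal b * ωb * ENNReal.ofReal ((s*(p*Real.log 2))⁻¹) := by
        rw [ENNReal.ofReal_toReal hωtop]
    _ ≤ ENNReal.ofReal b * ωb * (1 - ENNReal.ofReal q)⁻¹ := by gcongr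
    _ = ∑' k : ℕ, ENNReal.ofReal (b * q^k) * ωb := hsum.symm
    _ ≤ ∑' k : ℕ, ∫⁻ y in A k, g y := ENNReal.tsum_le_tsum perk
    _ = ∫⁻ y in ⋃ k, A k, g y := (lintegral_iUnion hAm hAd g).symm
    _ ≤ ∫⁻ y in (Metric.closedBall (0:Euc N) (2*R))ᶜ, g y := lintegral_mono_set hAsub


/-- uniform lower bound on the Gagliardo energy:
`∬ |u(x)−u(y)|^p/|x−y|^{N+sp} ≥ (c/s) ‖u‖_{L^p}^p` for `u` supported in the bounded set `Ω`. -/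
theorem statement14 (N : ℕ) (hN : 1 ≤ N) (Ω : Set (Euc N)) (hΩo : IsOpen Ω)
    (hΩb : Bornology.IsBounded Ω) (p : ℝ) (hp : 1 ≤ p) :
    ∃ c : ℝ, 0 < c ∧ ∀ s ∈ Set.Ioo (0 : ℝ) 1, ∀ u : Euc N → ℝ, Measurable u →
      (∀ᵐ x ∂(volume : Measure (Euc N)), x ∉ Ω → u x = 0) →
      ENNReal.ofReal (c / s) * (∫⁻ x, (‖u x‖₊ : ℝ≥0∞) ^ p) ≤
        ∫⁻ z : Euc N × Euc N,
          (‖u z.1 - u z.2‖₊ : ℝ≥0∞) ^ p / (‖z.1 - z.2‖₊ : ℝ≥0∞) ^ ((N : ℝ) + s * p) := by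
  obtain ⟨R₀, hR₀⟩ := hΩb.subset_closedBall 0
  set R : ℝ := max R₀ 1 with hRdef
  have hR1 : (1:ℝ) ≤ R := le_max_right _ _
  have hΩR : Ω ⊆ Metric.closedBall 0 R :=
    hR₀.trans (Metric.closedBall_subset_closedBall (le_max_left _ _))
  have hp0 : (0:ℝ) < p := lt_of_lt_of_le one_pos hp
  refine ⟨pcn N R p, ?_, ?_⟩
  · have h2N : (2:ℝ) ≤ 2^N := by
      calc (2:ℝ) = 2^1 := (pow_one 2).symm
      _ ≤ 2^N := pow_le_pow_right₀ one_le_two hN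
    have hR0 : (0:ℝ) < R := by linarith
    have hb : 0 < bcn N R p := by
      rw [bcn]
      apply _root_.mul_pos (_root_.mul_pos (by linarith) (by positivity))
        (Real.rpow_pos_of_pos (by linarith) _)
    have hω : 0 < (volume (Metric.ball (0:Euc N) 1)).toReal :=
      ENNReal.toReal_pos (Metric.measure_ball_pos volume 0 one_pos).ne' measure_ball_lt_top.ne
    rw [pcn]
    exact div_pos (_root_.mul_pos hb hω) (_root_.mul_pos hp0 (Real.log_pos one_lt_two))
  · intro s hs u hu hu0
    set T : Set (Euc N) := (Metric.closedBall (0:Euc N) (2*R))ᶜ with hT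
    have hTm : MeasurableSet T := measurableSet_closedBall.compl
    have hΩm : MeasurableSet Ω := hΩo.measurableSet
    set f : Euc N × Euc N → ℝ≥0∞ := fun z =>
      (‖u z.1 - u z.2‖₊ : ℝ≥0∞) ^ p / (‖z.1 - z.2‖₊ : ℝ≥0∞) ^ ((N : ℝ) + s * p) with hfdef
    have hf : Measurable f := by
      apply Measurable.div
      · exact (measurable_coe_nnreal_ennreal.comp
          ((hu.comp measurable_fst).sub (hu.comp measurable_snd)).nnnorm).pow_const _
      · exact (measurable_coe_nnreal_ennreal.comp
          (measurable_fst.sub measurable_snd).nnnorm).pow_const _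
    have hup : ∀ x : Euc N, ((‖u x‖₊ : ℝ≥0∞) ^ p) ≠ ⊤ :=
      fun x => ENNReal.rpow_ne_top_of_nonneg (by linarith) ENNReal.coe_ne_top
    have key : ∀ x ∈ Ω, ENNReal.ofReal (pcn N R p / s) * (‖u x‖₊ : ℝ≥0∞) ^ p ≤
        ∫⁻ y in T, f (x, y) := by
      intro x hx
      have h1 : ∫⁻ y in T, f (x, y)
          = ∫⁻ y in T, (‖u x‖₊ : ℝ≥0∞) ^ p * ((‖x - y‖₊ : ℝ≥0∞) ^ ((N : ℝ) + s * p))⁻¹ := by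
        apply lintegral_congr_ae
        filter_upwards [ae_restrict_mem hTm, ae_restrict_of_ae hu0] with y hyT hy0
        have hyΩ : y ∉ Ω := fun h =>
          hyT (Metric.closedBall_subset_closedBall (by linarith) (hΩR h))
        rw [hfdef]
        simp only
        rw [hy0 hyΩ, sub_zero, div_eq_mul_inv]
      rw [h1, lintegral_const_mul' _ _ (hup x), mul_comm]
      refine mul_le_mul_right ?_ _
      exact tail_bound N hN R s p hR1 hs.1 hs.2 hp x
        (by have h := hΩR hx; rwa [Metric.mem_closedBall, dist_zero_right] at h)
    have hnorm : ∫⁻ x, (‖u x‖₊ : ℝ≥0∞) ^ p = ∫⁻ x in Ω, (‖u x‖₊ : ℝ≥0∞) ^ p := by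
      rw [← lintegral_indicator hΩm]
      apply lintegral_congr_ae
      filter_upwards [hu0] with x hx
      by_cases hxΩ : x ∈ Ω
      · rw [Set.indicator_of_mem hxΩ]
      · rw [Set.indicator_of_notMem hxΩ, hx hxΩ]
        simp [ENNReal.zero_rpow_of_pos hp0]
    calc ENNReal.ofReal (pcn N R p / s) * ∫⁻ x, (‖u x‖₊ : ℝ≥0∞) ^ p
        = ∫⁻ x in Ω, ENNReal.ofReal (pcn N R p / s) * (‖u x‖₊ : ℝ≥0∞) ^ p := by
          rw [hnorm, lintegral_const_mul' _ _ ENNReal.ofReal_ne_top]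
      _ ≤ ∫⁻ x in Ω, ∫⁻ y in T, f (x, y) := setLIntegral_mono' hΩm key
      _ = ∫⁻ z in Ω ×ˢ T, f z := by
          rw [Measure.volume_eq_prod, ← Measure.prod_restrict,
            lintegral_prod _ hf.aemeasurable]
      _ ≤ ∫⁻ z : Euc N × Euc N, f z := setLIntegral_le_lintegral _ _


end
end
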